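/- arXiv:2212.05484 — 7 statements merged into one kernel-verified Lean document; each statement's English description precedes it below -/
import Mathlib

section
/- Let V ∈ ℝ³, let f, g : ℝ³ → ℝ be affine maps with f(V) ≠ 0 and g(V) ≠ 0, and let λ ∈ ℝ with λ ≠ 1. Define the affine map h := (1/(1−λ))·(f/f(V)) − (λ/(1−λ))·(g/g(V)), so that h(V) = 1 and h is an affine combination of f and g (hence its zero set is a plane of the pencil spanned by the zero sets of f and g, not passing through V). Then for every direction u ∈ ℝ³ and all t_a, t_b ∈ ℝ \ {0} with f(V + t_a·u) = 0, g(V + t_b·u) = 0 and t_b − λ·t_a ≠ 0, the point C := V + t_c·u with t_c := t_a·t_b·(1−λ)/(t_b − λ·t_a) satisfies h(C) = 0. In particular, all points obtained on the rulings through V by fixing the cross-ratio (A,B;C,V) = λ of the intersection points A, B with the planes {f = 0}, {g = 0} lie in one common plane of the pencil spanned by these two planes. -/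
/-!
Restricted to the ruling `t ↦ V + t • u`, the normalised affine map `f / f V` is the affine
function of `t` equal to `1` at `t = 0` and vanishing at `t_a`, i.e. `1 - t / t_a`; likewise
`g / g V` is `1 - t / t_b`. So `h(V + t • u)` is an affine function of `t` whose unique zero,
by a one-line computation, is the parameter `t_c` fixed by the cross-ratio.
-/

namespace AffineMap

variable {k E : Type*}

theorem apply_add_smul [Ring k] [AddCommGroup E] [Module k E] (f : E →ᵃ[k] k) (v u : E)
    (t : k) : f (v + t • u) = f v + t * f.linear u := by
  rw [add_comm v, ← vadd_eq_add, map_vadd, map_smul, smul_eq_mul, vadd_eq_add, add_comm]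

theorem apply_add_smul_div_of_apply_add_smul_eq_zero [Field k] [AddCommGroup E] [Module k E]
    (f : E →ᵃ[k] k) {v u : E} {s : k} (hv : f v ≠ 0) (hs : s ≠ 0) (hzero : f (v + s • u) = 0)
    (t : k) : f (v + t • u) / f v = 1 - t / s := by
  rw [apply_add_smul] at hzero ⊢
  have hlin : f.linear u = -f v / s := by
    rw [eq_div_iff hs]
    linear_combination hzero
  rw [hlin]
  field_simp
  ring

end AffineMap

theorem pencil_combination_eq_zero_at_crossRatio_parameter {k : Type*} [Field k] {lam ta tb : k}
    (hlam : lam ≠ 1) (hta : ta ≠ 0) (htb : tb ≠ 0) (hden : tb - lam * ta ≠ 0) :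
    (1 / (1 - lam)) * (1 - ta * tb * (1 - lam) / (tb - lam * ta) / ta) -
      (lam / (1 - lam)) * (1 - ta * tb * (1 - lam) / (tb - lam * ta) / tb) = 0 := by
  have h1 : 1 - lam ≠ 0 := sub_ne_zero.mpr hlam.symm
  field_simp
  ring

/-- Fixing the cross-ratio `(A,B;C,V) = λ` of the intersection points with
two planes `{f = 0}`, `{g = 0}` (not through `V`) along every ruling through `V` yields
points lying in one common plane of the pencil spanned by the two planes: the zero set of
`h = (1/(1-λ))·(f/f(V)) - (λ/(1-λ))·(g/g(V))`, which moreover satisfies `h(V) = 1`. -/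
theorem crossratio_curve_is_planar
    (V : Fin 3 → ℝ) (f g : (Fin 3 → ℝ) →ᵃ[ℝ] ℝ)
    (hf : f V ≠ 0) (hg : g V ≠ 0) (lam : ℝ) (hlam : lam ≠ 1) :
    (1 / (1 - lam)) * (f V / f V) - (lam / (1 - lam)) * (g V / g V) = 1 ∧
    ∀ (u : Fin 3 → ℝ) (ta tb : ℝ), ta ≠ 0 → tb ≠ 0 →
      f (V + ta • u) = 0 → g (V + tb • u) = 0 → tb - lam * ta ≠ 0 →
      (1 / (1 - lam)) * (f (V + (ta * tb * (1 - lam) / (tb - lam * ta)) • u) / f V) -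
        (lam / (1 - lam)) * (g (V + (ta * tb * (1 - lam) / (tb - lam * ta)) • u) / g V)
        = 0 := by
  refine ⟨?_, fun u ta tb hta htb hfa hgb hden => ?_⟩
  · have h1 : 1 - lam ≠ 0 := sub_ne_zero.mpr hlam.symm
    rw [div_self hf, div_self hg]
    field_simp
  · rw [f.apply_add_smul_div_of_apply_add_smul_eq_zero hf hta hfa,
      g.apply_add_smul_div_of_apply_add_smul_eq_zero hg htb hgb]
    exact pencil_combination_eq_zero_at_crossRatio_parameter hlam hta htb hden
end

section
/- Let I ⊆ ℝ be an open interval, let e₁, e₂, e₃ : I → ℝ³ be differentiable maps forming at every point a positively oriented orthonormal frame with e₃ = e₁ × e₂, and let κ : I → ℝ be differentiable, such that the Darboux frame equations e₁' = e₂, e₂' = −e₁ + κ·e₃, e₃' = −κ·e₂ hold on I. Let φ : I → ℝ be three times differentiable and set p := φ·e₁. Then on I the triple product of derivatives satisfies (p' × p'') · p''' = (φ² − φ·φ'' + 2·φ'²)·φ·κ' + (κ²·φ²·φ' + φ²·φ' + φ²·φ''' − 6·φ·φ'·φ'' + 6·φ'³)·κ. -/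
/-! By the Darboux equations, the derivative of `c₁ e₁ + c₂ e₂ + c₃ e₃` is again a combination of
`e₁, e₂, e₃` with coefficients built from the `cᵢ`, `cᵢ'` and `κ`; iterating from `p = φ e₁` gives
`p', p'', p'''` in the frame. Since the frame is orthonormal with `e₃ = e₁ × e₂`, `(p' × p'') · p'''`
is the determinant of the 3 × 3 matrix of these coefficients. -/

open Matrix Filter Topology

section DarbouxFrame

variable {E : Type*} [NormedAddCommGroup E] [NormedSpace ℝ E] {e₁ e₂ e₃ : ℝ → E} {κ : ℝ → ℝ}
  {x : ℝ}

theorem HasDerivAt.darboux_frame_comb (h₁ : HasDerivAt e₁ (e₂ x) x)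
    (h₂ : HasDerivAt e₂ (-e₁ x + κ x • e₃ x) x) (h₃ : HasDerivAt e₃ (-κ x • e₂ x) x)
    {c₁ c₂ c₃ : ℝ → ℝ} {c₁' c₂' c₃' : ℝ} (hc₁ : HasDerivAt c₁ c₁' x)
    (hc₂ : HasDerivAt c₂ c₂' x) (hc₃ : HasDerivAt c₃ c₃' x) :
    HasDerivAt (fun t => c₁ t • e₁ t + c₂ t • e₂ t + c₃ t • e₃ t)
      ((c₁' - c₂ x) • e₁ x + (c₁ x + c₂' - κ x * c₃ x) • e₂ x + (κ x * c₂ x + c₃') • e₃ x) x :=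
  ((hc₁.smul h₁).add (hc₂.smul h₂)).add (hc₃.smul h₃) |>.congr_deriv (by module)

theorem deriv_eq_darboux_frame_comb (h₁ : HasDerivAt e₁ (e₂ x) x)
    (h₂ : HasDerivAt e₂ (-e₁ x + κ x • e₃ x) x) (h₃ : HasDerivAt e₃ (-κ x • e₂ x) x)
    {c₁ c₂ c₃ : ℝ → ℝ} {c₁' c₂' c₃' : ℝ} (hc₁ : HasDerivAt c₁ c₁' x)
    (hc₂ : HasDerivAt c₂ c₂' x) (hc₃ : HasDerivAt c₃ c₃' x) {f : ℝ → E}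
    (hf : ∀ᶠ t in 𝓝 x, f t = c₁ t • e₁ t + c₂ t • e₂ t + c₃ t • e₃ t) :
    deriv f x =
      (c₁' - c₂ x) • e₁ x + (c₁ x + c₂' - κ x * c₃ x) • e₂ x + (κ x * c₂ x + c₃') • e₃ x :=
  ((h₁.darboux_frame_comb h₂ h₃ hc₁ hc₂ hc₃).congr_of_eventuallyEq hf).deriv

end DarbouxFrame

theorem triple_product_in_frame {R : Type*} [CommRing R] (a b : Fin 3 → R)
    (u₁ u₂ u₃ v₁ v₂ v₃ w₁ w₂ w₃ : R) :
    ((u₁ • a + u₂ • b + u₃ • (a ⨯₃ b)) ⨯₃ (v₁ • a + v₂ • b + v₃ • (a ⨯₃ b))) ⬝ᵥ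
      (w₁ • a + w₂ • b + w₃ • (a ⨯₃ b)) =
    (u₁ * (v₂ * w₃ - v₃ * w₂) - u₂ * (v₁ * w₃ - v₃ * w₁) + u₃ * (v₁ * w₂ - v₂ * w₁)) *
      ((a ⬝ᵥ a) * (b ⬝ᵥ b) - (a ⬝ᵥ b) ^ 2) := by
  simp only [crossProduct, dotProduct, Fin.sum_univ_three, LinearMap.mk₂_apply, Pi.add_apply,
    Pi.smul_apply, smul_eq_mul, cons_val_zero, cons_val_one, cons_val_two, head_cons, tail_cons]
  ring

theorem cone_curve_triple_product_general
    (I : Set ℝ) (hI : IsOpen I)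
    (e₁ e₂ e₃ : ℝ → (Fin 3 → ℝ)) (κ φ : ℝ → ℝ)
    (he₁ : ∀ x ∈ I, DifferentiableAt ℝ e₁ x)
    (he₂ : ∀ x ∈ I, DifferentiableAt ℝ e₂ x)
    (he₃ : ∀ x ∈ I, DifferentiableAt ℝ e₃ x)
    (hκ : ∀ x ∈ I, DifferentiableAt ℝ κ x)
    (hon₁ : ∀ x ∈ I, e₁ x ⬝ᵥ e₁ x = 1)
    (hon₂ : ∀ x ∈ I, e₂ x ⬝ᵥ e₂ x = 1)
    (hon₁₂ : ∀ x ∈ I, e₁ x ⬝ᵥ e₂ x = 0)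
    (hor : ∀ x ∈ I, e₃ x = e₁ x ⨯₃ e₂ x)
    (hd₁ : ∀ x ∈ I, deriv e₁ x = e₂ x)
    (hd₂ : ∀ x ∈ I, deriv e₂ x = -e₁ x + κ x • e₃ x)
    (hd₃ : ∀ x ∈ I, deriv e₃ x = -(κ x) • e₂ x)
    (hφ : ∀ x ∈ I, DifferentiableAt ℝ φ x)
    (hφ' : ∀ x ∈ I, DifferentiableAt ℝ (deriv φ) x)
    (hφ'' : ∀ x ∈ I, DifferentiableAt ℝ (deriv (deriv φ)) x)
    (p : ℝ → (Fin 3 → ℝ)) (hp : p = fun x => φ x • e₁ x) :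
    ∀ x ∈ I,
      (deriv p x ⨯₃ deriv (deriv p) x) ⬝ᵥ deriv (deriv (deriv p)) x =
        (φ x ^ 2 - φ x * deriv (deriv φ) x + 2 * (deriv φ x) ^ 2) * φ x * deriv κ x +
          ((κ x) ^ 2 * (φ x) ^ 2 * deriv φ x + (φ x) ^ 2 * deriv φ x +
            (φ x) ^ 2 * deriv (deriv (deriv φ)) x - 6 * φ x * deriv φ x * deriv (deriv φ) x +
            6 * (deriv φ x) ^ 3) * κ x := by
  have h₁ : ∀ t ∈ I, HasDerivAt e₁ (e₂ t) t := fun t ht => hd₁ t ht ▸ (he₁ t ht).hasDerivAt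
  have h₂ : ∀ t ∈ I, HasDerivAt e₂ (-e₁ t + κ t • e₃ t) t := fun t ht =>
    hd₂ t ht ▸ (he₂ t ht).hasDerivAt
  have h₃ : ∀ t ∈ I, HasDerivAt e₃ (-κ t • e₂ t) t := fun t ht => hd₃ t ht ▸ (he₃ t ht).hasDerivAt
  have hp₁ : ∀ t ∈ I, deriv p t = deriv φ t • e₁ t + φ t • e₂ t + (0 : ℝ) • e₃ t := by
    intro t ht
    rw [deriv_eq_darboux_frame_comb (h₁ t ht) (h₂ t ht) (h₃ t ht) (hφ t ht).hasDerivAt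
      (hasDerivAt_const t 0) (hasDerivAt_const t 0) (.of_forall fun s => by simp [hp])]
    module
  have hp₂ : ∀ t ∈ I, deriv (deriv p) t =
      (deriv (deriv φ) t - φ t) • e₁ t + (2 * deriv φ t) • e₂ t + (φ t * κ t) • e₃ t := by
    intro t ht
    rw [deriv_eq_darboux_frame_comb (h₁ t ht) (h₂ t ht) (h₃ t ht) (hφ' t ht).hasDerivAt
      (hφ t ht).hasDerivAt (hasDerivAt_const t 0) (eventually_of_mem (hI.mem_nhds ht) hp₁)]
    module
  intro x hx
  have hp₃ : deriv (deriv (deriv p)) x =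
      (deriv (deriv (deriv φ)) x - 3 * deriv φ x) • e₁ x +
      (3 * deriv (deriv φ) x - φ x - φ x * κ x ^ 2) • e₂ x +
      (3 * deriv φ x * κ x + φ x * deriv κ x) • e₃ x := by
    rw [deriv_eq_darboux_frame_comb (h₁ x hx) (h₂ x hx) (h₃ x hx)
      ((hφ'' x hx).hasDerivAt.fun_sub (hφ x hx).hasDerivAt) ((hφ' x hx).hasDerivAt.const_mul 2)
      ((hφ x hx).hasDerivAt.fun_mul (hκ x hx).hasDerivAt) (eventually_of_mem (hI.mem_nhds hx) hp₂)]
    module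
  rw [hp₁ x hx, hp₂ x hx, hp₃, hor x hx, triple_product_in_frame, hon₁ x hx, hon₂ x hx,
    hon₁₂ x hx]
  ring

/-- For a curve `p = φ·e₁` on a cone over a spherical curve with Darboux
frame `e₁, e₂, e₃` and geodesic curvature `κ`, the triple product `(p' × p'')·p'''` equals
`(φ² − φ·φ'' + 2·φ'²)·φ·κ' + (κ²·φ²·φ' + φ²·φ' + φ²·φ''' − 6·φ·φ'·φ'' + 6·φ'³)·κ`. -/
theorem cone_curve_triple_product
    (I : Set ℝ) (hI : IsOpen I) (hI' : I.OrdConnected)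
    (e₁ e₂ e₃ : ℝ → (Fin 3 → ℝ)) (κ φ : ℝ → ℝ)
    (he₁ : ∀ x ∈ I, DifferentiableAt ℝ e₁ x)
    (he₂ : ∀ x ∈ I, DifferentiableAt ℝ e₂ x)
    (he₃ : ∀ x ∈ I, DifferentiableAt ℝ e₃ x)
    (hκ : ∀ x ∈ I, DifferentiableAt ℝ κ x)
    (hon₁ : ∀ x ∈ I, e₁ x ⬝ᵥ e₁ x = 1)
    (hon₂ : ∀ x ∈ I, e₂ x ⬝ᵥ e₂ x = 1)
    (hon₁₂ : ∀ x ∈ I, e₁ x ⬝ᵥ e₂ x = 0)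
    (hor : ∀ x ∈ I, e₃ x = e₁ x ⨯₃ e₂ x)
    (hd₁ : ∀ x ∈ I, deriv e₁ x = e₂ x)
    (hd₂ : ∀ x ∈ I, deriv e₂ x = -e₁ x + κ x • e₃ x)
    (hd₃ : ∀ x ∈ I, deriv e₃ x = -(κ x) • e₂ x)
    (hφ : ∀ x ∈ I, DifferentiableAt ℝ φ x)
    (hφ' : ∀ x ∈ I, DifferentiableAt ℝ (deriv φ) x)
    (hφ'' : ∀ x ∈ I, DifferentiableAt ℝ (deriv (deriv φ)) x)
    (p : ℝ → (Fin 3 → ℝ)) (hp : p = fun x => φ x • e₁ x) :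
    ∀ x ∈ I,
      (deriv p x ⨯₃ deriv (deriv p) x) ⬝ᵥ deriv (deriv (deriv p)) x =
        (φ x ^ 2 - φ x * deriv (deriv φ) x + 2 * (deriv φ x) ^ 2) * φ x * deriv κ x +
          ((κ x) ^ 2 * (φ x) ^ 2 * deriv φ x + (φ x) ^ 2 * deriv φ x +
            (φ x) ^ 2 * deriv (deriv (deriv φ)) x - 6 * φ x * deriv φ x * deriv (deriv φ) x +
            6 * (deriv φ x) ^ 3) * κ x :=
  cone_curve_triple_product_general I hI e₁ e₂ e₃ κ φ he₁ he₂ he₃ hκ hon₁ hon₂ hon₁₂ hor hd₁ hd₂ hd₃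
    hφ hφ' hφ'' p hp
end

section
/- Let I ⊆ ℝ be an open interval and φ : I → ℝ three times differentiable with φ ≠ 0 on I. Set Φ := φ² − φ·φ'' + 2·φ'² and assume Φ ≠ 0 on I. Let W : I → ℝ be differentiable with W > 0 on I and W' = 2·φ'/(φ·Φ) + 8·φ'³/(φ³·Φ) + 8·φ'⁵/(φ⁵·Φ) − 4·φ'·φ''/(φ²·Φ) + 2·φ'·φ''²/(φ³·Φ) − 8·φ'³·φ''/(φ⁴·Φ). Define κ := Φ/(φ³·√W). Then κ is differentiable and satisfies on I the equation (φ² − φ·φ'' + 2·φ'²)·φ·κ' + (κ²·φ²·φ' + φ²·φ' + φ²·φ''' − 6·φ·φ'·φ'' + 6·φ'³)·κ = 0. -/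
/-!
With `κ = Φ/(φ³√W)` one has `κ'/κ = Φ'/Φ − 3φ'/φ − W'/(2W)`, and since
`φ²φ' + φ²φ''' − 6φφ'φ'' + 6φ'³ = 3φ'Φ − φΦ'`, the planarity equation is a Bernoulli equation
in `κ` which, after division by `κ`, collapses to `W' = 2φ'Φ/φ⁵`. The prescribed `W'` is exactly
this: its six terms add up to `2φ'Φ²/(φ⁵Φ)`.
-/

theorem HasDerivAt.div_pow_mul_sqrt {f g w : ℝ → ℝ} {f' g' w' x : ℝ} (n : ℕ)
    (hf : HasDerivAt f f' x) (hg : HasDerivAt g g' x) (hw : HasDerivAt w w' x)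
    (hg0 : g x ≠ 0) (hw0 : 0 < w x) :
    HasDerivAt (fun y => f y / (g y ^ n * √(w y)))
      ((f' - n * f x * g' / g x - f x * w' / (2 * w x)) / (g x ^ n * √(w x))) x := by
  have hs : 0 < √(w x) := Real.sqrt_pos.mpr hw0
  have hden : g x ^ n * √(w x) ≠ 0 := mul_ne_zero (pow_ne_zero _ hg0) hs.ne'
  have hsqrt : HasDerivAt (fun y => √(w y)) (w' / (2 * √(w x))) x := hw.sqrt hw0.ne'
  refine (hf.div ((hg.pow n).mul hsqrt) hden).congr_deriv ?_
  have hsq : √(w x) ^ 2 = w x := Real.sq_sqrt hw0.le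
  simp only [Pi.mul_apply, Pi.pow_apply]
  rcases n with _ | n
  · field_simp
    rw [hsq]; ring
  · simp only [Nat.cast_add, Nat.cast_one, Nat.add_sub_cancel, pow_succ]
    field_simp
    rw [hsq]; ring

theorem hasDerivAt_sq_sub_mul_deriv_deriv_add {f : ℝ → ℝ} {x : ℝ}
    (h₀ : DifferentiableAt ℝ f x) (h₁ : DifferentiableAt ℝ (deriv f) x)
    (h₂ : DifferentiableAt ℝ (deriv (deriv f)) x) :
    HasDerivAt (fun y => f y ^ 2 - f y * deriv (deriv f) y + 2 * deriv f y ^ 2)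
      (2 * f x * deriv f x + 3 * deriv f x * deriv (deriv f) x -
        f x * deriv (deriv (deriv f)) x) x := by
  refine ((h₀.hasDerivAt.pow 2).sub (h₀.hasDerivAt.mul h₂.hasDerivAt)
    |>.add ((h₁.hasDerivAt.pow 2).const_mul 2)).congr_deriv ?_
  ring

theorem weight_deriv_eq {φ₀ φ₁ φ₂ Φ : ℝ} (hφ₀ : φ₀ ≠ 0) (hΦ : Φ = φ₀ ^ 2 - φ₀ * φ₂ + 2 * φ₁ ^ 2)
    (hΦ0 : Φ ≠ 0) :
    2 * φ₁ / (φ₀ * Φ) + 8 * φ₁ ^ 3 / (φ₀ ^ 3 * Φ) + 8 * φ₁ ^ 5 / (φ₀ ^ 5 * Φ) -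
        4 * (φ₁ * φ₂) / (φ₀ ^ 2 * Φ) + 2 * (φ₁ * φ₂ ^ 2) / (φ₀ ^ 3 * Φ) -
        8 * (φ₁ ^ 3 * φ₂) / (φ₀ ^ 4 * Φ) =
      2 * φ₁ * Φ / φ₀ ^ 5 := by
  calc _ = 2 * φ₁ * (φ₀ ^ 2 - φ₀ * φ₂ + 2 * φ₁ ^ 2) ^ 2 / (φ₀ ^ 5 * Φ) := by
        field_simp; ring
    _ = 2 * φ₁ * Φ / φ₀ ^ 5 := by rw [← hΦ]; field_simp

theorem planarity_ode_of_weight_deriv {φ₀ φ₁ φ₂ φ₃ Φ Φ' W W' : ℝ} (hφ₀ : φ₀ ≠ 0) (hW : 0 < W)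
    (hΦ : Φ = φ₀ ^ 2 - φ₀ * φ₂ + 2 * φ₁ ^ 2) (hΦ' : Φ' = 2 * φ₀ * φ₁ + 3 * φ₁ * φ₂ - φ₀ * φ₃)
    (hW' : W' = 2 * φ₁ * Φ / φ₀ ^ 5) :
    Φ * φ₀ * ((Φ' - 3 * Φ * φ₁ / φ₀ - Φ * W' / (2 * W)) / (φ₀ ^ 3 * √W)) +
      ((Φ / (φ₀ ^ 3 * √W)) ^ 2 * φ₀ ^ 2 * φ₁ + φ₀ ^ 2 * φ₁ + φ₀ ^ 2 * φ₃ -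
        6 * φ₀ * φ₁ * φ₂ + 6 * φ₁ ^ 3) * (Φ / (φ₀ ^ 3 * √W)) = 0 := by
  have hs : 0 < √W := Real.sqrt_pos.mpr hW
  have hsq : √W ^ 2 = W := Real.sq_sqrt hW.le
  subst hΦ' hW'
  field_simp
  rw [hsq, hΦ]
  ring

theorem cone_ode_solution_general
    (I : Set ℝ)
    (φ W : ℝ → ℝ)
    (hφ : ∀ x ∈ I, DifferentiableAt ℝ φ x)
    (hφ' : ∀ x ∈ I, DifferentiableAt ℝ (deriv φ) x)
    (hφ'' : ∀ x ∈ I, DifferentiableAt ℝ (deriv (deriv φ)) x)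
    (hφ0 : ∀ x ∈ I, φ x ≠ 0)
    (Φ : ℝ → ℝ)
    (hΦ : Φ = fun x => φ x ^ 2 - φ x * deriv (deriv φ) x + 2 * (deriv φ x) ^ 2)
    (hΦ0 : ∀ x ∈ I, Φ x ≠ 0)
    (hW : ∀ x ∈ I, DifferentiableAt ℝ W x)
    (hWpos : ∀ x ∈ I, 0 < W x)
    (hW' : ∀ x ∈ I, deriv W x =
      2 * deriv φ x / (φ x * Φ x) + 8 * (deriv φ x) ^ 3 / ((φ x) ^ 3 * Φ x) +
        8 * (deriv φ x) ^ 5 / ((φ x) ^ 5 * Φ x) -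
        4 * (deriv φ x * deriv (deriv φ) x) / ((φ x) ^ 2 * Φ x) +
        2 * (deriv φ x * (deriv (deriv φ) x) ^ 2) / ((φ x) ^ 3 * Φ x) -
        8 * ((deriv φ x) ^ 3 * deriv (deriv φ) x) / ((φ x) ^ 4 * Φ x))
    (κ : ℝ → ℝ) (hκ : κ = fun x => Φ x / ((φ x) ^ 3 * Real.sqrt (W x))) :
    ∀ x ∈ I, DifferentiableAt ℝ κ x ∧
      (φ x ^ 2 - φ x * deriv (deriv φ) x + 2 * (deriv φ x) ^ 2) * φ x * deriv κ x +
        ((κ x) ^ 2 * (φ x) ^ 2 * deriv φ x + (φ x) ^ 2 * deriv φ x +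
          (φ x) ^ 2 * deriv (deriv (deriv φ)) x - 6 * φ x * deriv φ x * deriv (deriv φ) x +
          6 * (deriv φ x) ^ 3) * κ x = 0 := by
  intro x hx
  have hΦx : Φ x = φ x ^ 2 - φ x * deriv (deriv φ) x + 2 * deriv φ x ^ 2 := by rw [hΦ]
  have hΦd : HasDerivAt Φ _ x :=
    hΦ ▸ hasDerivAt_sq_sub_mul_deriv_deriv_add (hφ x hx) (hφ' x hx) (hφ'' x hx)
  have hκd : HasDerivAt κ _ x := hκ ▸
    hΦd.div_pow_mul_sqrt 3 (hφ x hx).hasDerivAt (hW x hx).hasDerivAt (hφ0 x hx) (hWpos x hx)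
  refine ⟨hκd.differentiableAt, ?_⟩
  rw [hκd.deriv, ← hΦx, hκ]
  push_cast
  exact planarity_ode_of_weight_deriv (hφ0 x hx) (hWpos x hx) hΦx rfl
    ((hW' x hx).trans (weight_deriv_eq (hφ0 x hx) hΦx (hΦ0 x hx)))

/-- The function `κ = Φ/(φ³·√W)`, with `Φ = φ² − φ·φ'' + 2·φ'²` and `W` a
primitive of the stated combination of derivatives of `φ`, is differentiable and solves the
planarity ODE `(φ² − φ·φ'' + 2·φ'²)·φ·κ' + (κ²·φ²·φ' + φ²·φ' + φ²·φ''' − 6·φ·φ'·φ''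
+ 6·φ'³)·κ = 0`. -/
theorem cone_ode_solution
    (I : Set ℝ) (hI : IsOpen I) (hI' : I.OrdConnected)
    (φ W : ℝ → ℝ)
    (hφ : ∀ x ∈ I, DifferentiableAt ℝ φ x)
    (hφ' : ∀ x ∈ I, DifferentiableAt ℝ (deriv φ) x)
    (hφ'' : ∀ x ∈ I, DifferentiableAt ℝ (deriv (deriv φ)) x)
    (hφ0 : ∀ x ∈ I, φ x ≠ 0)
    (Φ : ℝ → ℝ)
    (hΦ : Φ = fun x => φ x ^ 2 - φ x * deriv (deriv φ) x + 2 * (deriv φ x) ^ 2)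
    (hΦ0 : ∀ x ∈ I, Φ x ≠ 0)
    (hW : ∀ x ∈ I, DifferentiableAt ℝ W x)
    (hWpos : ∀ x ∈ I, 0 < W x)
    (hW' : ∀ x ∈ I, deriv W x =
      2 * deriv φ x / (φ x * Φ x) + 8 * (deriv φ x) ^ 3 / ((φ x) ^ 3 * Φ x) +
        8 * (deriv φ x) ^ 5 / ((φ x) ^ 5 * Φ x) -
        4 * (deriv φ x * deriv (deriv φ) x) / ((φ x) ^ 2 * Φ x) +
        2 * (deriv φ x * (deriv (deriv φ) x) ^ 2) / ((φ x) ^ 3 * Φ x) -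
        8 * ((deriv φ x) ^ 3 * deriv (deriv φ) x) / ((φ x) ^ 4 * Φ x))
    (κ : ℝ → ℝ) (hκ : κ = fun x => Φ x / ((φ x) ^ 3 * Real.sqrt (W x))) :
    ∀ x ∈ I, DifferentiableAt ℝ κ x ∧
      (φ x ^ 2 - φ x * deriv (deriv φ) x + 2 * (deriv φ x) ^ 2) * φ x * deriv κ x +
        ((κ x) ^ 2 * (φ x) ^ 2 * deriv φ x + (φ x) ^ 2 * deriv φ x +
          (φ x) ^ 2 * deriv (deriv (deriv φ)) x - 6 * φ x * deriv φ x * deriv (deriv φ) x +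
          6 * (deriv φ x) ^ 3) * κ x = 0 :=
  cone_ode_solution_general I φ W hφ hφ' hφ'' hφ0 Φ hΦ hΦ0 hW hWpos hW' κ hκ
end

section
/- Let I ⊆ ℝ be an open interval and φ₁, φ₂ : I → ℝ twice differentiable with φ₁ ≠ 0, φ₂ ≠ 0 on I. Set Φᵢ := φᵢ² − φᵢ·φᵢ'' + 2·φᵢ'² and assume Φ₂ ≠ 0 on I and Φ₁²·φ₂⁶ − Φ₂²·φ₁⁶ = 0 on I. Then there exist constants C₁, C₂ ∈ ℝ and a sign ε ∈ {1, −1} such that φ₂·(C₁·sin ς − C₂·cos ς) + ε ≠ 0 and φ₁(ς) = φ₂(ς)/(φ₂(ς)·(C₁·sin ς − C₂·cos ς) + ε) for all ς ∈ I. -/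
/-!
With `u := 1/φ` one has `u'' + u = Φ/φ³`, so the hypothesis says `(u₁'' + u₁)² = (u₂'' + u₂)²`.
Both sides of `u'' + u` are derivatives (of `u' + ∫ u`), so by Darboux's theorem they have constant
sign on the interval; hence `u₁'' + u₁ = ε (u₂'' + u₂)` for a fixed sign `ε`. Then
`w := u₁ - ε u₂` solves `w'' + w = 0`, so `w = C₁ sin - C₂ cos`, and `1/φ₁ = ε/φ₂ + w` is the claim.
-/

open Real

noncomputable def profilePhi (φ : ℝ → ℝ) (x : ℝ) : ℝ :=
  φ x ^ 2 - φ x * deriv (deriv φ) x + 2 * deriv φ x ^ 2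

lemma hasDerivAt_neg_deriv_div_sq {φ : ℝ → ℝ} {x : ℝ} (hφ : DifferentiableAt ℝ φ x)
    (hφ' : DifferentiableAt ℝ (deriv φ) x) (h0 : φ x ≠ 0) :
    HasDerivAt (fun y => -deriv φ y / φ y ^ 2) (profilePhi φ x / φ x ^ 3 - (φ x)⁻¹) x := by
  refine (hφ'.hasDerivAt.neg.div (hφ.hasDerivAt.pow 2) (pow_ne_zero 2 h0)).congr_deriv ?_
  simp only [Pi.neg_apply, Pi.pow_apply, profilePhi]
  field_simp
  ring

lemma ContinuousOn.exists_forall_hasDerivAt {I : Set ℝ} (hI : IsOpen I) (hI' : I.OrdConnected)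
    {u : ℝ → ℝ} (hu : ContinuousOn u I) : ∃ F : ℝ → ℝ, ∀ x ∈ I, HasDerivAt F (u x) x := by
  rcases I.eq_empty_or_nonempty with rfl | ⟨x₀, hx₀⟩
  · exact ⟨0, by simp⟩
  refine ⟨fun y => ∫ t in x₀..y, u t, fun x hx => ?_⟩
  exact intervalIntegral.integral_hasDerivAt_right
    ((hu.mono (hI'.uIcc_subset hx₀ hx)).intervalIntegrable)
    (hu.stronglyMeasurableAtFilter hI x hx) ((hu x hx).continuousAt (hI.mem_nhds hx))

lemma exists_forall_hasDerivAt_profilePhi_div {I : Set ℝ} (hI : IsOpen I) (hI' : I.OrdConnected)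
    {φ : ℝ → ℝ} (hφ : ∀ x ∈ I, DifferentiableAt ℝ φ x)
    (hφ' : ∀ x ∈ I, DifferentiableAt ℝ (deriv φ) x) (h0 : ∀ x ∈ I, φ x ≠ 0) :
    ∃ F : ℝ → ℝ, ∀ x ∈ I, HasDerivAt F (profilePhi φ x / φ x ^ 3) x := by
  have hcont : ContinuousOn (fun y => (φ y)⁻¹) I := fun y hy =>
    ((hφ y hy).continuousAt.inv₀ (h0 y hy)).continuousWithinAt
  obtain ⟨G, hG⟩ := hcont.exists_forall_hasDerivAt hI hI'
  refine ⟨fun y => -deriv φ y / φ y ^ 2 + G y, fun x hx => ?_⟩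
  exact ((hasDerivAt_neg_deriv_div_sq (hφ x hx) (hφ' x hx) (h0 x hx)).add (hG x hx)).congr_deriv
    (by ring)

lemma exists_sign_eq_mul_of_sq_eq {I : Set ℝ} (hI : Convex ℝ I) {f g F G : ℝ → ℝ}
    (hF : ∀ x ∈ I, HasDerivWithinAt F (f x) I x) (hG : ∀ x ∈ I, HasDerivWithinAt G (g x) I x)
    (hg : ∀ x ∈ I, g x ≠ 0) (hfg : ∀ x ∈ I, f x ^ 2 = g x ^ 2) :
    ∃ ε : ℝ, (ε = 1 ∨ ε = -1) ∧ ∀ x ∈ I, f x = ε * g x := by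
  have hf : ∀ x ∈ I, f x ≠ 0 := fun x hx hfx =>
    hg x hx (pow_eq_zero_iff two_ne_zero |>.mp (by rw [← hfg x hx, hfx]; ring))
  have hpm : ∀ x ∈ I, f x = g x ∨ f x = -g x := fun x hx =>
    sq_eq_sq_iff_eq_or_eq_neg.mp (hfg x hx)
  rcases hasDerivWithinAt_forall_lt_or_forall_gt_of_forall_ne hI hF hf with hf' | hf' <;>
    rcases hasDerivWithinAt_forall_lt_or_forall_gt_of_forall_ne hI hG hg with hg' | hg'
  all_goals first
    | (refine ⟨1, .inl rfl, fun x hx => ?_⟩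
       rcases hpm x hx with h | h <;> linarith [hf' x hx, hg' x hx])
    | (refine ⟨-1, .inr rfl, fun x hx => ?_⟩
       rcases hpm x hx with h | h <;> linarith [hf' x hx, hg' x hx])

lemma exists_eq_sin_sub_cos_of_hasDerivAt {I : Set ℝ} (hI : IsOpen I) (hI' : IsPreconnected I)
    {w W : ℝ → ℝ} (hw : ∀ x ∈ I, HasDerivAt w (W x) x) (hW : ∀ x ∈ I, HasDerivAt W (-w x) x) :
    ∃ C₁ C₂ : ℝ, ∀ x ∈ I, w x = C₁ * sin x - C₂ * cos x := by
  have const_of {f : ℝ → ℝ} (hf : ∀ x ∈ I, HasDerivAt f 0 x) : ∃ a, ∀ x ∈ I, f x = a :=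
    hI.exists_is_const_of_deriv_eq_zero hI'
      (fun x hx => (hf x hx).differentiableAt.differentiableWithinAt)
      (fun x hx => (hf x hx).deriv)
  obtain ⟨C₁, hC₁⟩ := const_of (f := fun x => w x * sin x + W x * cos x) fun x hx =>
    (((hw x hx).mul (hasDerivAt_sin x)).add ((hW x hx).mul (hasDerivAt_cos x))).congr_deriv
      (by ring)
  obtain ⟨C₂, hC₂⟩ := const_of (f := fun x => W x * sin x - w x * cos x) fun x hx =>
    (((hW x hx).mul (hasDerivAt_sin x)).sub ((hw x hx).mul (hasDerivAt_cos x))).congr_deriv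
      (by ring)
  refine ⟨C₁, C₂, fun x hx => ?_⟩
  linear_combination sin x * hC₁ x hx - cos x * hC₂ x hx - w x * sin_sq_add_cos_sq x

/-- Conversely, if two nonvanishing twice differentiable profile functions
`φ₁, φ₂` with `Φ₂ ≠ 0` satisfy `Φ₁²·φ₂⁶ − Φ₂²·φ₁⁶ = 0` on an open interval, then
`φ₁ = φ₂/(φ₂·(C₁·sin ς − C₂·cos ς) ± 1)` for some constants `C₁, C₂` and a sign. -/
theorem U1_solution_general
    (I : Set ℝ) (hI : IsOpen I) (hI' : I.OrdConnected)
    (φ₁ φ₂ : ℝ → ℝ)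
    (hφ₁ : ∀ x ∈ I, DifferentiableAt ℝ φ₁ x)
    (hφ₁' : ∀ x ∈ I, DifferentiableAt ℝ (deriv φ₁) x)
    (hφ₂ : ∀ x ∈ I, DifferentiableAt ℝ φ₂ x)
    (hφ₂' : ∀ x ∈ I, DifferentiableAt ℝ (deriv φ₂) x)
    (hφ₁0 : ∀ x ∈ I, φ₁ x ≠ 0)
    (hφ₂0 : ∀ x ∈ I, φ₂ x ≠ 0)
    (hΦ₂0 : ∀ x ∈ I,
      φ₂ x ^ 2 - φ₂ x * deriv (deriv φ₂) x + 2 * (deriv φ₂ x) ^ 2 ≠ 0)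
    (hU₁ : ∀ x ∈ I,
      (φ₁ x ^ 2 - φ₁ x * deriv (deriv φ₁) x + 2 * (deriv φ₁ x) ^ 2) ^ 2 * (φ₂ x) ^ 6 -
        (φ₂ x ^ 2 - φ₂ x * deriv (deriv φ₂) x + 2 * (deriv φ₂ x) ^ 2) ^ 2 * (φ₁ x) ^ 6
        = 0) :
    ∃ C₁ C₂ ε : ℝ, (ε = 1 ∨ ε = -1) ∧ ∀ x ∈ I,
      φ₂ x * (C₁ * Real.sin x - C₂ * Real.cos x) + ε ≠ 0 ∧
      φ₁ x = φ₂ x / (φ₂ x * (C₁ * Real.sin x - C₂ * Real.cos x) + ε) := by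
  obtain ⟨F₁, hF₁⟩ := exists_forall_hasDerivAt_profilePhi_div hI hI' hφ₁ hφ₁' hφ₁0
  obtain ⟨F₂, hF₂⟩ := exists_forall_hasDerivAt_profilePhi_div hI hI' hφ₂ hφ₂' hφ₂0
  have hsq : ∀ x ∈ I, (profilePhi φ₁ x / φ₁ x ^ 3) ^ 2 = (profilePhi φ₂ x / φ₂ x ^ 3) ^ 2 :=
    fun x hx => by
      have h₁ := hφ₁0 x hx
      have h₂ := hφ₂0 x hx
      have hU : profilePhi φ₁ x ^ 2 * φ₂ x ^ 6 - profilePhi φ₂ x ^ 2 * φ₁ x ^ 6 = 0 := hU₁ x hx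
      field_simp
      linear_combination hU
  obtain ⟨ε, hε, hΦ⟩ := exists_sign_eq_mul_of_sq_eq hI'.convex
    (fun x hx => (hF₁ x hx).hasDerivWithinAt) (fun x hx => (hF₂ x hx).hasDerivWithinAt)
    (fun x hx => div_ne_zero (hΦ₂0 x hx) (pow_ne_zero 3 (hφ₂0 x hx))) hsq
  obtain ⟨C₁, C₂, hw⟩ := exists_eq_sin_sub_cos_of_hasDerivAt hI hI'.isPreconnected
    (w := fun y => (φ₁ y)⁻¹ - ε * (φ₂ y)⁻¹)
    (W := fun y => -deriv φ₁ y / φ₁ y ^ 2 - ε * (-deriv φ₂ y / φ₂ y ^ 2))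
    (fun x hx => ((hφ₁ x hx).hasDerivAt.inv (hφ₁0 x hx)).sub
      (((hφ₂ x hx).hasDerivAt.inv (hφ₂0 x hx)).const_mul ε))
    (fun x hx => ((hasDerivAt_neg_deriv_div_sq (hφ₁ x hx) (hφ₁' x hx) (hφ₁0 x hx)).sub
      ((hasDerivAt_neg_deriv_div_sq (hφ₂ x hx) (hφ₂' x hx) (hφ₂0 x hx)).const_mul ε)).congr_deriv
        (by linear_combination hΦ x hx))
  refine ⟨C₁, C₂, ε, hε, fun x hx => ?_⟩
  have h₁ := hφ₁0 x hx
  have h₂ := hφ₂0 x hx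
  have hden : φ₂ x * (C₁ * sin x - C₂ * cos x) + ε = φ₂ x / φ₁ x := by
    rw [← hw x hx]
    field_simp
    ring
  rw [hden]
  exact ⟨div_ne_zero h₂ h₁, by field_simp⟩
end

section
/- Let I ⊆ ℝ be an open interval, let e₁, e₂, e₃ : I → ℝ³ be differentiable maps forming at every point a positively oriented orthonormal frame with e₃ = e₁ × e₂, let κ : I → ℝ be differentiable, and suppose e₁' = κ·e₂, e₂' = −κ·e₁ and e₃' = 0 on I. Let c : I → ℝ³ be differentiable with c' = e₁, let φ : I → ℝ be three times differentiable and set p := c + φ·e₃. Then on I the triple product of derivatives satisfies (p' × p'') · p''' = φ'·κ³ + φ'''·κ − φ''·κ'. -/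
open Matrix

/-!
Write `F = (e₁, e₂, e₃)` for the moving frame. Since `e₃' = 0`, differentiating
`p = c + φ e₃` three times with the Frenet-type equations gives the coordinates of
`p', p'', p'''` in `F`: `(1, 0, φ')`, `(0, κ, φ'')` and `(-κ², κ', φ''')`. The triple product of
three vectors is the determinant of their coordinate matrix times `det F`, and `det F = 1`
because `F` is a positively oriented orthonormal frame.
-/

section TripleProduct

variable {R : Type*} [CommRing R]

theorem cross_dot_vecMul (M : Matrix (Fin 3) (Fin 3) R) (u v w : Fin 3 → R) :
    (u ᵥ* M) ⨯₃ (v ᵥ* M) ⬝ᵥ (w ᵥ* M) = det (of ![u, v, w]) * det M := by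
  rw [dotProduct_comm, triple_product_permutation, triple_product_eq_det, ← det_mul]
  congr 1
  ext i j
  fin_cases i <;> rfl

theorem det_orthonormal_frame {a b : Fin 3 → R} (ha : a ⬝ᵥ a = 1) (hb : b ⬝ᵥ b = 1)
    (hab : a ⬝ᵥ b = 0) : det (of ![a, b, a ⨯₃ b]) = 1 :=
  calc det (of ![a, b, a ⨯₃ b]) = a ⬝ᵥ b ⨯₃ (a ⨯₃ b) := (triple_product_eq_det ..).symm
    _ = 1 := by
      rw [triple_product_permutation, triple_product_permutation, cross_dot_cross, ha, hb, hab]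
      ring

end TripleProduct

theorem deriv_add_smul_of_deriv_eq_zero {𝕜 E : Type*} [NontriviallyNormedField 𝕜]
    [NormedAddCommGroup E] [NormedSpace 𝕜 E] {f e : 𝕜 → E} {a : 𝕜 → 𝕜} {x : 𝕜}
    (hf : DifferentiableAt 𝕜 f x) (ha : DifferentiableAt 𝕜 a x) (he : DifferentiableAt 𝕜 e x)
    (he' : deriv e x = 0) :
    deriv (fun y => f y + a y • e y) x = deriv f x + deriv a x • e x := by
  rw [deriv_fun_add hf (ha.fun_smul he), deriv_fun_smul ha he, he', smul_zero, zero_add]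

theorem cylinder_curve_triple_product_general
    (I : Set ℝ) (hI : IsOpen I)
    (e₁ e₂ e₃ : ℝ → (Fin 3 → ℝ)) (κ φ : ℝ → ℝ) (c : ℝ → (Fin 3 → ℝ))
    (he₁ : ∀ x ∈ I, DifferentiableAt ℝ e₁ x)
    (he₂ : ∀ x ∈ I, DifferentiableAt ℝ e₂ x)
    (he₃ : ∀ x ∈ I, DifferentiableAt ℝ e₃ x)
    (hκ : ∀ x ∈ I, DifferentiableAt ℝ κ x)
    (hon₁ : ∀ x ∈ I, e₁ x ⬝ᵥ e₁ x = 1)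
    (hon₂ : ∀ x ∈ I, e₂ x ⬝ᵥ e₂ x = 1)
    (hon₁₂ : ∀ x ∈ I, e₁ x ⬝ᵥ e₂ x = 0)
    (hor : ∀ x ∈ I, e₃ x = e₁ x ⨯₃ e₂ x)
    (hd₁ : ∀ x ∈ I, deriv e₁ x = κ x • e₂ x)
    (hd₂ : ∀ x ∈ I, deriv e₂ x = -(κ x) • e₁ x)
    (hd₃ : ∀ x ∈ I, deriv e₃ x = 0)
    (hc : ∀ x ∈ I, DifferentiableAt ℝ c x)
    (hc' : ∀ x ∈ I, deriv c x = e₁ x)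
    (hφ : ∀ x ∈ I, DifferentiableAt ℝ φ x)
    (hφ' : ∀ x ∈ I, DifferentiableAt ℝ (deriv φ) x)
    (hφ'' : ∀ x ∈ I, DifferentiableAt ℝ (deriv (deriv φ)) x)
    (p : ℝ → (Fin 3 → ℝ)) (hp : p = fun x => c x + φ x • e₃ x) :
    ∀ x ∈ I,
      (deriv p x ⨯₃ deriv (deriv p) x) ⬝ᵥ deriv (deriv (deriv p)) x =
        deriv φ x * (κ x) ^ 3 + deriv (deriv (deriv φ)) x * κ x -
          deriv (deriv φ) x * deriv κ x := by
  have hp' : I.EqOn (deriv p) fun y => e₁ y + deriv φ y • e₃ y := fun y hy => by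
    rw [hp, deriv_add_smul_of_deriv_eq_zero (hc y hy) (hφ y hy) (he₃ y hy) (hd₃ y hy), hc' y hy]
  have hp'' : I.EqOn (deriv (deriv p)) fun y => κ y • e₂ y + deriv (deriv φ) y • e₃ y :=
    fun y hy => by
      rw [hp'.deriv hI hy, deriv_add_smul_of_deriv_eq_zero (he₁ y hy) (hφ' y hy) (he₃ y hy)
        (hd₃ y hy), hd₁ y hy]
  intro x hx
  have hp''' : deriv (deriv (deriv p)) x =
      (deriv κ x • e₂ x - κ x ^ 2 • e₁ x) + deriv (deriv (deriv φ)) x • e₃ x := by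
    rw [hp''.deriv hI hx, deriv_add_smul_of_deriv_eq_zero ((hκ x hx).fun_smul (he₂ x hx))
      (hφ'' x hx) (he₃ x hx) (hd₃ x hx), deriv_fun_smul (hκ x hx) (he₂ x hx), hd₂ x hx]
    module
  set F : Matrix (Fin 3) (Fin 3) ℝ := of ![e₁ x, e₂ x, e₃ x]
  have hF : ∀ a b d : ℝ, ![a, b, d] ᵥ* F = a • e₁ x + b • e₂ x + d • e₃ x := fun a b d => by
    simp [F, add_assoc]
  have hv₁ : deriv p x = ![1, 0, deriv φ x] ᵥ* F := by rw [hF, hp' hx]; module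
  have hv₂ : deriv (deriv p) x = ![0, κ x, deriv (deriv φ) x] ᵥ* F := by
    rw [hF, hp'' hx]; module
  have hv₃ :
      deriv (deriv (deriv p)) x = ![-κ x ^ 2, deriv κ x, deriv (deriv (deriv φ)) x] ᵥ* F := by
    rw [hF, hp''']; module
  have hdetF : det F = 1 := by
    rw [show F = of ![e₁ x, e₂ x, e₁ x ⨯₃ e₂ x] by rw [← hor x hx]]
    exact det_orthonormal_frame (hon₁ x hx) (hon₂ x hx) (hon₁₂ x hx)
  rw [hv₁, hv₂, hv₃, cross_dot_vecMul, hdetF, det_fin_three]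
  simp only [of_apply, cons_val', cons_val_zero, cons_val_one, cons_val, cons_val_fin_one]
  ring

/-- For a curve `p = c + φ·e₃` on a cylinder over an arc-length
parametrized planar curve `c` with frame `e₁ = c'`, `e₂`, constant ruling direction `e₃`
and curvature `κ`, the triple product `(p' × p'')·p'''` equals
`φ'·κ³ + φ'''·κ − φ''·κ'`. -/
theorem cylinder_curve_triple_product
    (I : Set ℝ) (hI : IsOpen I) (hI' : I.OrdConnected)
    (e₁ e₂ e₃ : ℝ → (Fin 3 → ℝ)) (κ φ : ℝ → ℝ) (c : ℝ → (Fin 3 → ℝ))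
    (he₁ : ∀ x ∈ I, DifferentiableAt ℝ e₁ x)
    (he₂ : ∀ x ∈ I, DifferentiableAt ℝ e₂ x)
    (he₃ : ∀ x ∈ I, DifferentiableAt ℝ e₃ x)
    (hκ : ∀ x ∈ I, DifferentiableAt ℝ κ x)
    (hon₁ : ∀ x ∈ I, e₁ x ⬝ᵥ e₁ x = 1)
    (hon₂ : ∀ x ∈ I, e₂ x ⬝ᵥ e₂ x = 1)
    (hon₁₂ : ∀ x ∈ I, e₁ x ⬝ᵥ e₂ x = 0)
    (hor : ∀ x ∈ I, e₃ x = e₁ x ⨯₃ e₂ x)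
    (hd₁ : ∀ x ∈ I, deriv e₁ x = κ x • e₂ x)
    (hd₂ : ∀ x ∈ I, deriv e₂ x = -(κ x) • e₁ x)
    (hd₃ : ∀ x ∈ I, deriv e₃ x = 0)
    (hc : ∀ x ∈ I, DifferentiableAt ℝ c x)
    (hc' : ∀ x ∈ I, deriv c x = e₁ x)
    (hφ : ∀ x ∈ I, DifferentiableAt ℝ φ x)
    (hφ' : ∀ x ∈ I, DifferentiableAt ℝ (deriv φ) x)
    (hφ'' : ∀ x ∈ I, DifferentiableAt ℝ (deriv (deriv φ)) x)
    (p : ℝ → (Fin 3 → ℝ)) (hp : p = fun x => c x + φ x • e₃ x) :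
    ∀ x ∈ I,
      (deriv p x ⨯₃ deriv (deriv p) x) ⬝ᵥ deriv (deriv (deriv p)) x =
        deriv φ x * (κ x) ^ 3 + deriv (deriv (deriv φ)) x * κ x -
          deriv (deriv φ) x * deriv κ x :=
  cylinder_curve_triple_product_general I hI e₁ e₂ e₃ κ φ c he₁ he₂ he₃ hκ hon₁ hon₂ hon₁₂ hor hd₁
    hd₂ hd₃ hc hc' hφ hφ' hφ'' p hp
end

section
/- Let I ⊆ ℝ be an open interval, φ : I → ℝ three times differentiable, and κ : I → ℝ differentiable with κ ≠ 0 on I. If φ'·κ³ + φ'''·κ − φ''·κ' = 0 on I, then the function (φ''/κ)² + φ'² is constant on I; equivalently, there is a constant C ∈ ℝ with κ²·(C − φ'²) = φ''² on I. -/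
/-- If `κ ≠ 0` solves the cylindrical planarity ODE
`φ'·κ³ + φ'''·κ − φ''·κ' = 0` on an open interval, then `(φ''/κ)² + φ'²` is constant;
equivalently there is a constant `C` with `κ²·(C − φ'²) = φ''²`. -/
theorem cylinder_ode_first_integral
    (I : Set ℝ) (hI : IsOpen I) (hI' : I.OrdConnected)
    (φ κ : ℝ → ℝ)
    (hφ : ∀ x ∈ I, DifferentiableAt ℝ φ x)
    (hφ' : ∀ x ∈ I, DifferentiableAt ℝ (deriv φ) x)
    (hφ'' : ∀ x ∈ I, DifferentiableAt ℝ (deriv (deriv φ)) x)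
    (hκ : ∀ x ∈ I, DifferentiableAt ℝ κ x)
    (hκ0 : ∀ x ∈ I, κ x ≠ 0)
    (hode : ∀ x ∈ I,
      deriv φ x * (κ x) ^ 3 + deriv (deriv (deriv φ)) x * κ x -
        deriv (deriv φ) x * deriv κ x = 0) :
    ∃ C : ℝ, ∀ x ∈ I,
      (deriv (deriv φ) x / κ x) ^ 2 + (deriv φ x) ^ 2 = C ∧
      (κ x) ^ 2 * (C - (deriv φ x) ^ 2) = (deriv (deriv φ) x) ^ 2 := by
  rcases Set.eq_empty_or_nonempty I with h | ⟨x₀, hx₀⟩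
  · exact ⟨0, fun x hx => by simp [h] at hx⟩
  set F : ℝ → ℝ := fun x => (deriv (deriv φ) x / κ x) ^ 2 + (deriv φ x) ^ 2 with hF
  have key : ∀ x ∈ I, HasDerivAt F 0 x := by
    intro x hx
    have h1 : HasDerivAt (deriv φ) (deriv (deriv φ) x) x := (hφ' x hx).hasDerivAt
    have h2 : HasDerivAt (deriv (deriv φ)) (deriv (deriv (deriv φ)) x) x :=
      (hφ'' x hx).hasDerivAt
    have hk : HasDerivAt κ (deriv κ x) x := (hκ x hx).hasDerivAt
    have hq : HasDerivAt (fun y => deriv (deriv φ) y / κ y)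
        ((deriv (deriv (deriv φ)) x * κ x - deriv (deriv φ) x * deriv κ x) / (κ x) ^ 2) x :=
      h2.div hk (hκ0 x hx)
    have hsum := ((hq.pow 2).add (h1.pow 2))
    have hval : (2 : ℕ) * (deriv (deriv φ) x / κ x) ^ (2 - 1) *
        ((deriv (deriv (deriv φ)) x * κ x - deriv (deriv φ) x * deriv κ x) / (κ x) ^ 2) +
        (2 : ℕ) * (deriv φ x) ^ (2 - 1) * deriv (deriv φ) x = 0 := by
      have hode' : deriv (deriv (deriv φ)) x * κ x - deriv (deriv φ) x * deriv κ x =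
          -(deriv φ x * (κ x) ^ 3) := by linarith [hode x hx]
      rw [hode']
      have hk0 := hκ0 x hx
      field_simp
      have hkk : κ x * (κ x)⁻¹ = 1 := mul_inv_cancel₀ hk0
      linear_combination (-(deriv (deriv φ) x * deriv φ x * 2)) * hkk
    rw [hval] at hsum
    exact hsum
  have hconv : Convex ℝ I := convex_iff_ordConnected.mpr hI'
  have hconst : ∀ x ∈ I, F x = F x₀ := by
    intro x hx
    have hdiffOn : DifferentiableOn ℝ F I := fun y hy =>
      (key y hy).differentiableAt.differentiableWithinAt
    have := hconv.is_const_of_fderivWithin_eq_zero hdiffOn (fun y hy => by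
      rw [fderivWithin_of_isOpen hI hy]
      have := (key y hy).hasFDerivAt
      rw [this.fderiv]
      ext t
      simp) hx hx₀
    exact this
  refine ⟨F x₀, fun x hx => ?_⟩
  have h1 := hconst x hx
  refine ⟨h1, ?_⟩
  have hk0 := hκ0 x hx
  have : (deriv (deriv φ) x / κ x) ^ 2 = F x₀ - (deriv φ x) ^ 2 := by
    rw [← h1]; ring
  rw [div_pow] at this
  field_simp at this
  linarith
end

section
/- In the discrete strip setup with μ = 0 (cylindrical case), assume s₁·s₂·s₃ ≠ 0, t₁·t₂·t₃ ≠ 0, (t₁ − t₂)·(t₁ + t₂)·(t₁·t₂ − 1)·(t₁·t₂ + 1) ≠ 0, (t₁ − t₃)·(t₁ + t₃)·(t₁·t₃ − 1)·(t₁·t₃ + 1) ≠ 0 and (s₁ − s₃)·(s₁ + s₃)·(s₁·s₃ − 1)·(s₁·s₃ + 1) ≠ 0. If for every δ₂ ∈ (−π, π) there exists δ₁ ∈ (−π, π) with D₁(δ₁, δ₂) = 0 and D₂(δ₁, δ₂) = 0, then R₂ = 0 and R₃ = 0, where Rᵢ := s₁²sᵢt₁tᵢ² − s₁sᵢ²t₁²tᵢ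 − s₁²sᵢt₁ + s₁sᵢ²tᵢ + s₁t₁²tᵢ − sᵢt₁tᵢ² − s₁tᵢ + sᵢt₁ for i ∈ {2, 3}. -/
/-!
Divide the coplanarity determinant by `sin θ₁ sin θ₂ sin θ₃`: in the cylindrical case
`D = 0` says that `w = (sin δ₂, sin (δ₁ - δ₂), -sin δ₁)` is orthogonal to the vector of
cotangents `(cot θ₁, cot θ₂, cot θ₃)`. Hence a solution `(δ₁, δ₂)` of both equations makes `w`
parallel to `n = p ⨯₃ q`, where `p` and `q` are the cotangent vectors of the `σ`'s and `τ`'s.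
Eliminating `δ₁` with `cos² δ₁ + sin² δ₁ = 1` gives `n₀² = n₁² + n₂² + 2 cos δ₂ n₁ n₂`, and
using this for `δ₂ = π/2` and `δ₂ = π/3` yields `n₁ n₂ = 0` and `n₀² = n₁² + n₂²`. Together with
`q ⬝ᵥ n = 0` and `q₀² ≠ q₁², q₂²` this forces `n₁ = n₂ = 0`, which in half-angle variables is
`R₃ = 0` and `R₂ = 0`.
-/

open Real Matrix

noncomputable section

/-- Rotation matrix about the `x`-axis by angle `δ`. -/
def rotX (δ : ℝ) : Matrix (Fin 3) (Fin 3) ℝ :=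
  !![1, 0, 0;
     0, Real.cos δ, -Real.sin δ;
     0, Real.sin δ, Real.cos δ]

/-- Rotation matrix by angle `δ` about the line through the origin with direction
`(cos μ, sin μ, 0)`. -/
def rotAxis (μ δ : ℝ) : Matrix (Fin 3) (Fin 3) ℝ :=
  !![(1 - Real.cos μ ^ 2) * Real.cos δ + Real.cos μ ^ 2,
       Real.cos μ * Real.sin μ * (1 - Real.cos δ),
       Real.sin μ * Real.sin δ;
     Real.cos μ * Real.sin μ * (1 - Real.cos δ),
       (1 - Real.sin μ ^ 2) * Real.cos δ + Real.sin μ ^ 2,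
       -(Real.cos μ * Real.sin δ);
     -(Real.sin μ * Real.sin δ),
       Real.cos μ * Real.sin δ,
       Real.cos δ]

/-- The unit vector `(cos θ, sin θ, 0)` in the `xy`-plane. -/
def dirVec (θ : ℝ) : Fin 3 → ℝ := ![Real.cos θ, Real.sin θ, 0]

/-- Coplanarity determinant of the three cut edge directions `R₁·(cos θ₁, sin θ₁, 0)`,
`(cos θ₂, sin θ₂, 0)`, `R₂·(cos (μ+θ₃), sin (μ+θ₃), 0)`. -/
def Ddet (μ δ₁ δ₂ θ₁ θ₂ θ₃ : ℝ) : ℝ :=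
  Matrix.det (Matrix.of
    ![(rotX δ₁).mulVec (dirVec θ₁),
      dirVec θ₂,
      (rotAxis μ δ₂).mulVec (dirVec (μ + θ₃))])

-- No hypothesis is needed: where `sin θ = 0` both sides take the junk value `0`.
theorem Real.cot_eq_one_sub_tan_half_sq_div (θ : ℝ) :
    cot θ = (1 - tan (θ / 2) ^ 2) / (2 * tan (θ / 2)) := by
  rw [cot_eq_cos_div_sin, ← inv_div, ← tan_eq_sin_div_cos,
    tan_eq_one_sub_tan_half_sq_div_one_add_tan_half_sq, inv_div]

theorem Real.sin_ne_zero_of_tan_half_ne_zero {θ : ℝ} (h : tan (θ / 2) ≠ 0) : sin θ ≠ 0 := by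
  rw [sin_eq_two_mul_tan_half_div_one_add_tan_half_sq]
  positivity

section HalfAngle

variable {K : Type*} [Field K] [CharZero K]

theorem one_sub_sq_div_two_mul_sq_ne {x y : K} (hx : x ≠ 0) (hy : y ≠ 0)
    (hne : (x - y) * (x + y) * (x * y - 1) * (x * y + 1) ≠ 0) :
    ((1 - x ^ 2) / (2 * x)) ^ 2 ≠ ((1 - y ^ 2) / (2 * y)) ^ 2 := by
  refine fun heq ↦ hne ?_
  field_simp at heq
  linear_combination heq

theorem numerator_eq_zero_of_one_sub_sq_div_two_mul_eq {s s' t t' : K} (hs : s ≠ 0) (hs' : s' ≠ 0)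
    (ht : t ≠ 0) (ht' : t' ≠ 0)
    (h : (1 - s ^ 2) / (2 * s) * ((1 - t' ^ 2) / (2 * t')) =
      (1 - s' ^ 2) / (2 * s') * ((1 - t ^ 2) / (2 * t))) :
    s ^ 2 * s' * t * t' ^ 2 - s * s' ^ 2 * t ^ 2 * t' - s ^ 2 * s' * t +
      s * s' ^ 2 * t' + s * t ^ 2 * t' - s' * t * t' ^ 2 - s * t' + s' * t = 0 := by
  field_simp at h
  linear_combination h

end HalfAngle

section CrossProduct

theorem cross_cross_eq_zero_of_dotProduct_eq_zero {R : Type*} [CommRing R]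
    {w p q : Fin 3 → R} (hp : w ⬝ᵥ p = 0) (hq : w ⬝ᵥ q = 0) : w ⨯₃ (p ⨯₃ q) = 0 := by
  rw [cross_cross_eq_smul_sub_smul', hq, dotProduct_comm, hp, zero_smul, zero_smul, sub_zero]

variable {K : Type*} [Field K]

theorem eq_zero_and_eq_zero_of_sq_eq {a b x y : K}
    (hlin : a * x + b * y = 0) (hsq : x ^ 2 = y ^ 2) (hab : a ^ 2 ≠ b ^ 2) : x = 0 ∧ y = 0 := by
  have hx : x ^ 2 * (a ^ 2 - b ^ 2) = 0 := by
    linear_combination (a * x - b * y) * hlin - b ^ 2 * hsq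
  have hx : x = 0 := pow_eq_zero_iff two_ne_zero |>.mp <|
    (mul_eq_zero.mp hx).resolve_right (sub_ne_zero.mpr hab)
  exact ⟨hx, pow_eq_zero_iff two_ne_zero |>.mp (by rw [← hsq, hx, zero_pow two_ne_zero])⟩

theorem eq_zero_of_sq_eq_of_mul_eq_zero {q n : Fin 3 → K}
    (hqn : q ⬝ᵥ n = 0) (hsq : n 0 ^ 2 = n 1 ^ 2 + n 2 ^ 2) (hmul : n 1 * n 2 = 0)
    (h₁ : q 0 ^ 2 ≠ q 1 ^ 2) (h₂ : q 0 ^ 2 ≠ q 2 ^ 2) : n 1 = 0 ∧ n 2 = 0 := by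
  rw [vec3_dotProduct] at hqn
  rcases mul_eq_zero.mp hmul with hn₁ | hn₂
  · rw [hn₁] at hqn hsq
    exact ⟨hn₁, (eq_zero_and_eq_zero_of_sq_eq (x := n 0) (y := n 2)
      (by linear_combination hqn) (by linear_combination hsq) h₂).2⟩
  · rw [hn₂] at hqn hsq
    exact ⟨(eq_zero_and_eq_zero_of_sq_eq (x := n 0) (y := n 1)
      (by linear_combination hqn) (by linear_combination hsq) h₁).2, hn₂⟩

end CrossProduct

def cylinderVec (δ₁ δ₂ : ℝ) : Fin 3 → ℝ := ![sin δ₂, sin (δ₁ - δ₂), -sin δ₁]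

theorem Ddet_zero_eq_mul_dotProduct {θ₁ θ₂ θ₃ : ℝ} (h₁ : sin θ₁ ≠ 0) (h₂ : sin θ₂ ≠ 0) (h₃ : sin θ₃ ≠ 0)
    (δ₁ δ₂ : ℝ) :
    Ddet 0 δ₁ δ₂ θ₁ θ₂ θ₃ =
      sin θ₁ * sin θ₂ * sin θ₃ * (cylinderVec δ₁ δ₂ ⬝ᵥ ![cot θ₁, cot θ₂, cot θ₃]) := by
  simp [Ddet, rotX, rotAxis, dirVec, cylinderVec, det_fin_three, cot_eq_cos_div_sin, sin_sub]
  field_simp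
  ring

theorem Ddet_zero_eq_zero_iff {θ₁ θ₂ θ₃ : ℝ} (h₁ : sin θ₁ ≠ 0) (h₂ : sin θ₂ ≠ 0)
    (h₃ : sin θ₃ ≠ 0) {δ₁ δ₂ : ℝ} :
    Ddet 0 δ₁ δ₂ θ₁ θ₂ θ₃ = 0 ↔ cylinderVec δ₁ δ₂ ⬝ᵥ ![cot θ₁, cot θ₂, cot θ₃] = 0 := by
  simp [Ddet_zero_eq_mul_dotProduct h₁ h₂ h₃, h₁, h₂, h₃]

theorem sq_eq_of_cylinderVec_cross_eq_zero {δ₁ δ₂ : ℝ} {n : Fin 3 → ℝ} (hδ₂ : sin δ₂ ≠ 0)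
    (h : cylinderVec δ₁ δ₂ ⨯₃ n = 0) :
    n 0 ^ 2 = n 1 ^ 2 + n 2 ^ 2 + 2 * cos δ₂ * (n 1 * n 2) := by
  have h₁ := congrFun h 1
  have h₂ := congrFun h 2
  simp [cylinderVec, cross_apply, sin_sub] at h₁ h₂
  refine mul_left_cancel₀ (pow_ne_zero 2 hδ₂) ?_
  linear_combination
    (-(sin δ₂ * n 1 + (sin δ₁ * cos δ₂ - cos δ₁ * sin δ₂) * n 0) - 2 * cos δ₂ * sin δ₂ * n 2) * h₂
    + (-(sin δ₁ * n 0) + sin δ₂ * n 2 + 2 * cos δ₂ * (sin δ₁ * cos δ₂ - cos δ₁ * sin δ₂) * n 0) * h₁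
    - sin δ₂ ^ 2 * n 0 ^ 2 * sin_sq_add_cos_sq δ₁ + sin δ₁ ^ 2 * n 0 ^ 2 * sin_sq_add_cos_sq δ₂

theorem discrete_cylinder_necessary_condition_general
    (σ₁ σ₂ σ₃ τ₁ τ₂ τ₃ s₁ s₂ s₃ t₁ t₂ t₃ : ℝ)
    (hs₁ : s₁ = Real.tan (σ₁ / 2)) (hs₂ : s₂ = Real.tan (σ₂ / 2))
    (hs₃ : s₃ = Real.tan (σ₃ / 2))
    (ht₁ : t₁ = Real.tan (τ₁ / 2)) (ht₂ : t₂ = Real.tan (τ₂ / 2))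
    (ht₃ : t₃ = Real.tan (τ₃ / 2))
    (hs0 : s₁ * s₂ * s₃ ≠ 0) (ht0 : t₁ * t₂ * t₃ ≠ 0)
    (ht₁₂ : (t₁ - t₂) * (t₁ + t₂) * (t₁ * t₂ - 1) * (t₁ * t₂ + 1) ≠ 0)
    (ht₁₃ : (t₁ - t₃) * (t₁ + t₃) * (t₁ * t₃ - 1) * (t₁ * t₃ + 1) ≠ 0)
    (hflex : ∀ δ₂ ∈ Set.Ioo (-π) π, ∃ δ₁ ∈ Set.Ioo (-π) π,
      Ddet 0 δ₁ δ₂ σ₁ σ₂ σ₃ = 0 ∧ Ddet 0 δ₁ δ₂ τ₁ τ₂ τ₃ = 0) :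
    (s₁ ^ 2 * s₂ * t₁ * t₂ ^ 2 - s₁ * s₂ ^ 2 * t₁ ^ 2 * t₂ - s₁ ^ 2 * s₂ * t₁ +
      s₁ * s₂ ^ 2 * t₂ + s₁ * t₁ ^ 2 * t₂ - s₂ * t₁ * t₂ ^ 2 - s₁ * t₂ + s₂ * t₁ = 0) ∧
    (s₁ ^ 2 * s₃ * t₁ * t₃ ^ 2 - s₁ * s₃ ^ 2 * t₁ ^ 2 * t₃ - s₁ ^ 2 * s₃ * t₁ +
      s₁ * s₃ ^ 2 * t₃ + s₁ * t₁ ^ 2 * t₃ - s₃ * t₁ * t₃ ^ 2 - s₁ * t₃ + s₃ * t₁ = 0) := by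
  subst hs₁ hs₂ hs₃ ht₁ ht₂ ht₃
  obtain ⟨⟨hs₁, hs₂⟩, hs₃⟩ := mul_ne_zero_iff.mp hs0 |>.imp_left mul_ne_zero_iff.mp
  obtain ⟨⟨ht₁, ht₂⟩, ht₃⟩ := mul_ne_zero_iff.mp ht0 |>.imp_left mul_ne_zero_iff.mp
  set n := ![cot σ₁, cot σ₂, cot σ₃] ⨯₃ ![cot τ₁, cot τ₂, cot τ₃]
  have hrel : ∀ δ₂ ∈ Set.Ioo (-π) π, sin δ₂ ≠ 0 →
      n 0 ^ 2 = n 1 ^ 2 + n 2 ^ 2 + 2 * cos δ₂ * (n 1 * n 2) := by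
    intro δ₂ hδ₂ hδ₂0
    obtain ⟨δ₁, -, hσ, hτ⟩ := hflex δ₂ hδ₂
    rw [Ddet_zero_eq_zero_iff (sin_ne_zero_of_tan_half_ne_zero hs₁)
      (sin_ne_zero_of_tan_half_ne_zero hs₂) (sin_ne_zero_of_tan_half_ne_zero hs₃)] at hσ
    rw [Ddet_zero_eq_zero_iff (sin_ne_zero_of_tan_half_ne_zero ht₁)
      (sin_ne_zero_of_tan_half_ne_zero ht₂) (sin_ne_zero_of_tan_half_ne_zero ht₃)] at hτ
    exact sq_eq_of_cylinderVec_cross_eq_zero hδ₂0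
      (cross_cross_eq_zero_of_dotProduct_eq_zero hσ hτ)
  have hπ := pi_pos
  have h90 := hrel (π / 2) ⟨by linarith, by linarith⟩ (by simp)
  have h60 := hrel (π / 3) ⟨by linarith, by linarith⟩ (sin_pi_div_three ▸ by positivity)
  rw [cos_pi_div_two] at h90
  rw [cos_pi_div_three] at h60
  obtain ⟨hn₁, hn₂⟩ := eq_zero_of_sq_eq_of_mul_eq_zero (dot_cross_self _ _)
    (by linear_combination h90) (by linear_combination h90 - h60)
    (by simpa [cot_eq_one_sub_tan_half_sq_div] using one_sub_sq_div_two_mul_sq_ne ht₁ ht₂ ht₁₂)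
    (by simpa [cot_eq_one_sub_tan_half_sq_div] using one_sub_sq_div_two_mul_sq_ne ht₁ ht₃ ht₁₃)
  simp only [cross_apply, cot_eq_one_sub_tan_half_sq_div] at hn₁ hn₂
  exact ⟨numerator_eq_zero_of_one_sub_sq_div_two_mul_eq hs₁ hs₂ ht₁ ht₂ (sub_eq_zero.mp hn₂),
    numerator_eq_zero_of_one_sub_sq_div_two_mul_eq hs₁ hs₃ ht₁ ht₃ (sub_eq_zero.mp hn₁).symm⟩

/-- In the cylindrical case `μ = 0`: if the discrete strip admits a
one-parametric isometric deformation keeping both triples of cut edges coplanar, then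
(under the stated nondegeneracy assumptions) `R₂ = 0` and `R₃ = 0`. -/
theorem discrete_cylinder_necessary_condition
    (σ₁ σ₂ σ₃ τ₁ τ₂ τ₃ s₁ s₂ s₃ t₁ t₂ t₃ : ℝ)
    (hs₁ : s₁ = Real.tan (σ₁ / 2)) (hs₂ : s₂ = Real.tan (σ₂ / 2))
    (hs₃ : s₃ = Real.tan (σ₃ / 2))
    (ht₁ : t₁ = Real.tan (τ₁ / 2)) (ht₂ : t₂ = Real.tan (τ₂ / 2))
    (ht₃ : t₃ = Real.tan (τ₃ / 2))
    (hs0 : s₁ * s₂ * s₃ ≠ 0) (ht0 : t₁ * t₂ * t₃ ≠ 0)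
    (ht₁₂ : (t₁ - t₂) * (t₁ + t₂) * (t₁ * t₂ - 1) * (t₁ * t₂ + 1) ≠ 0)
    (ht₁₃ : (t₁ - t₃) * (t₁ + t₃) * (t₁ * t₃ - 1) * (t₁ * t₃ + 1) ≠ 0)
    (hs₁₃ : (s₁ - s₃) * (s₁ + s₃) * (s₁ * s₃ - 1) * (s₁ * s₃ + 1) ≠ 0)
    (hflex : ∀ δ₂ ∈ Set.Ioo (-π) π, ∃ δ₁ ∈ Set.Ioo (-π) π,
      Ddet 0 δ₁ δ₂ σ₁ σ₂ σ₃ = 0 ∧ Ddet 0 δ₁ δ₂ τ₁ τ₂ τ₃ = 0) :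
    (s₁ ^ 2 * s₂ * t₁ * t₂ ^ 2 - s₁ * s₂ ^ 2 * t₁ ^ 2 * t₂ - s₁ ^ 2 * s₂ * t₁ +
      s₁ * s₂ ^ 2 * t₂ + s₁ * t₁ ^ 2 * t₂ - s₂ * t₁ * t₂ ^ 2 - s₁ * t₂ + s₂ * t₁ = 0) ∧
    (s₁ ^ 2 * s₃ * t₁ * t₃ ^ 2 - s₁ * s₃ ^ 2 * t₁ ^ 2 * t₃ - s₁ ^ 2 * s₃ * t₁ +
      s₁ * s₃ ^ 2 * t₃ + s₁ * t₁ ^ 2 * t₃ - s₃ * t₁ * t₃ ^ 2 - s₁ * t₃ + s₃ * t₁ = 0) :=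
  discrete_cylinder_necessary_condition_general σ₁ σ₂ σ₃ τ₁ τ₂ τ₃ s₁ s₂ s₃ t₁ t₂ t₃ hs₁ hs₂ hs₃ ht₁
    ht₂ ht₃ hs0 ht0 ht₁₂ ht₁₃ hflex
end
end
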